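/- Let M̄ be a finite set, F_p a 2×2 real symmetric positive definite matrix, and for each y ∈ M̄ let H_y be a 2×2 real symmetric positive semidefinite matrix; write H(Y) = ∑_{y∈Y} H_y. Let Y ⊆ M̄ and A ⊆ M̄ with A \ Y ≠ ∅, and let z' ∈ argmax_{y ∈ A\Y} λ₁(F_p + H({y} ∪ Y)). Then Tr((F_p + H(Y))⁻¹) − Tr((F_p + H(A ∪ Y))⁻¹) ≤ ( ∑_{y ∈ A\Y} Tr(H_y) ) / ( λ₂(F_p + H(Y)) · λ₂(F_p + H({z'} ∪ Y)) ). -/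

import Mathlib

/-!
Write `P = F_p + H(Y)` and `Q = F_p + H(A ∪ Y) = P + H(A \ Y)`, with eigenvalues `p₁ ≥ p₂` and
`q₁ ≥ q₂`. Then `Tr P⁻¹ - Tr Q⁻¹ = (q₁ - p₁)/(p₁ q₁) + (q₂ - p₂)/(p₂ q₂)`. Both eigenvalues are
monotone in the Loewner order, so both numerators are nonnegative, they add up to
`Tr Q - Tr P = ∑_{y ∈ A \ Y} Tr H_y`, and every denominator is at least `p₂ λ₂(F_p + H({z'} ∪ Y))`
because `F_p + H({z'} ∪ Y) ≤ Q`.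
-/

open Matrix

/-- The largest eigenvalue `λ₁(P)` of a real symmetric `2 × 2` matrix `P`
(for a symmetric matrix `Tr(P)² − 4 det(P) ≥ 0` and the eigenvalues are
`(Tr(P) ± √(Tr(P)² − 4 det P))/2`). -/
noncomputable def eig1 (P : Matrix (Fin 2) (Fin 2) ℝ) : ℝ :=
  (P.trace + Real.sqrt (P.trace ^ 2 - 4 * P.det)) / 2

/-- The smallest eigenvalue `λ₂(P)` of a real symmetric `2 × 2` matrix `P`. -/
noncomputable def eig2 (P : Matrix (Fin 2) (Fin 2) ℝ) : ℝ :=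
  (P.trace - Real.sqrt (P.trace ^ 2 - 4 * P.det)) / 2

lemma inv_add_inv_sub_inv_add_inv_le {p₁ p₂ q₁ q₂ r : ℝ} (hp₂ : 0 < p₂) (hp : p₂ ≤ p₁)
    (hq : q₂ ≤ q₁) (hpq₁ : p₁ ≤ q₁) (hpq₂ : p₂ ≤ q₂) (hr : 0 < r) (hrq : r ≤ q₂) :
    (p₁⁻¹ + p₂⁻¹) - (q₁⁻¹ + q₂⁻¹) ≤ (q₁ + q₂ - (p₁ + p₂)) / (p₂ * r) := by
  have hp₁ : 0 < p₁ := hp₂.trans_le hp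
  have hq₂ : 0 < q₂ := hr.trans_le hrq
  have hq₁ : 0 < q₁ := hq₂.trans_le hq
  calc (p₁⁻¹ + p₂⁻¹) - (q₁⁻¹ + q₂⁻¹)
      = (q₁ - p₁) / (p₁ * q₁) + (q₂ - p₂) / (p₂ * q₂) := by field_simp; ring
    _ ≤ (q₁ - p₁) / (p₂ * r) + (q₂ - p₂) / (p₂ * r) :=
      add_le_add (div_le_div_of_nonneg_left (by linarith) (by positivity) (by nlinarith))
        (div_le_div_of_nonneg_left (by linarith) (by positivity) (by nlinarith))
    _ = (q₁ + q₂ - (p₁ + p₂)) / (p₂ * r) := by ring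

section FinTwo

variable {M P E : Matrix (Fin 2) (Fin 2) ℝ}

namespace Matrix.IsHermitian

lemma trace_fin_two_eq_eigenvalues (hM : M.IsHermitian) :
    M.trace = hM.eigenvalues 0 + hM.eigenvalues 1 := by
  simp [hM.trace_eq_sum_eigenvalues, Fin.sum_univ_two]

lemma det_fin_two_eq_eigenvalues (hM : M.IsHermitian) :
    M.det = hM.eigenvalues 0 * hM.eigenvalues 1 := by
  simp [hM.det_eq_prod_eigenvalues, Fin.prod_univ_two]

lemma posSemidef_iff_trace_nonneg_and_det_nonneg (hM : M.IsHermitian) :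
    M.PosSemidef ↔ 0 ≤ M.trace ∧ 0 ≤ M.det := by
  rw [hM.posSemidef_iff_eigenvalues_nonneg, Pi.le_def, Fin.forall_fin_two,
    hM.trace_fin_two_eq_eigenvalues, hM.det_fin_two_eq_eigenvalues]
  simp only [Pi.zero_apply]
  constructor
  · rintro ⟨h₀, h₁⟩
    exact ⟨add_nonneg h₀ h₁, mul_nonneg h₀ h₁⟩
  · rintro ⟨ht, hd⟩
    constructor <;> nlinarith

lemma trace_sq_sub_four_mul_det_nonneg (hM : M.IsHermitian) :
    0 ≤ M.trace ^ 2 - 4 * M.det := by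
  rw [hM.trace_fin_two_eq_eigenvalues, hM.det_fin_two_eq_eigenvalues]
  nlinarith [sq_nonneg (hM.eigenvalues 0 - hM.eigenvalues 1)]

end Matrix.IsHermitian

lemma eig1_add_eig2 (M : Matrix (Fin 2) (Fin 2) ℝ) : eig1 M + eig2 M = M.trace := by
  unfold eig1 eig2
  ring

lemma eig2_le_eig1 (M : Matrix (Fin 2) (Fin 2) ℝ) : eig2 M ≤ eig1 M := by
  unfold eig1 eig2
  linarith [Real.sqrt_nonneg (M.trace ^ 2 - 4 * M.det)]

lemma eig1_mul_eig2 (hM : M.IsHermitian) : eig1 M * eig2 M = M.det := by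
  have h := Real.sq_sqrt hM.trace_sq_sub_four_mul_det_nonneg
  unfold eig1 eig2
  linear_combination -h / 4

lemma eig1_eq_neg_eig2_neg (M : Matrix (Fin 2) (Fin 2) ℝ) : eig1 M = -eig2 (-M) := by
  simp only [eig1, eig2, trace_neg, det_neg, Fintype.card_fin]
  ring_nf

lemma trace_sub_smul_one (M : Matrix (Fin 2) (Fin 2) ℝ) (t : ℝ) :
    (M - t • 1).trace = (eig1 M - t) + (eig2 M - t) := by
  rw [trace_sub, trace_smul, trace_one, ← eig1_add_eig2]
  simp only [Fintype.card_fin, Nat.cast_ofNat, smul_eq_mul]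
  ring

lemma det_sub_smul_one (hM : M.IsHermitian) (t : ℝ) :
    (M - t • 1).det = (eig1 M - t) * (eig2 M - t) := by
  have hsum := eig1_add_eig2 M
  have h₁ := eig1_mul_eig2 hM
  rw [trace_fin_two] at hsum
  rw [det_fin_two] at h₁ ⊢
  simp only [one_fin_two, smul_of, smul_cons, smul_eq_mul, mul_one, mul_zero, smul_empty,
    Matrix.sub_apply, of_apply, cons_val', cons_val_zero, cons_val_fin_one, cons_val_one, sub_zero]
  linear_combination t * hsum - h₁

lemma sub_eig2_smul_one_posSemidef (hM : M.IsHermitian) : (M - eig2 M • 1).PosSemidef := by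
  rw [(hM.sub (isHermitian_one.smul (.all _))).posSemidef_iff_trace_nonneg_and_det_nonneg,
    trace_sub_smul_one, det_sub_smul_one hM]
  constructor
  · linarith [eig2_le_eig1 M]
  · simp

lemma le_eig2_of_posSemidef (hM : M.IsHermitian) {t : ℝ} (h : (M - t • 1).PosSemidef) :
    t ≤ eig2 M := by
  have htr := h.trace_nonneg
  have hdet := h.det_nonneg
  rw [trace_sub_smul_one] at htr
  rw [det_sub_smul_one hM] at hdet
  nlinarith

lemma eig2_le_eig2_add (hP : P.IsHermitian) (hE : E.PosSemidef) : eig2 P ≤ eig2 (P + E) := by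
  refine le_eig2_of_posSemidef (hP.add hE.1) ?_
  rw [add_sub_right_comm]
  exact (sub_eig2_smul_one_posSemidef hP).add hE

lemma eig1_le_eig1_add (hP : P.IsHermitian) (hE : E.PosSemidef) : eig1 P ≤ eig1 (P + E) := by
  have h := eig2_le_eig2_add (hP.add hE.1).neg hE
  rw [show -(P + E) + E = -P by abel] at h
  rw [eig1_eq_neg_eig2_neg, eig1_eq_neg_eig2_neg]
  linarith

lemma eig2_pos (hM : M.PosDef) : 0 < eig2 M := by
  have htr := hM.trace_pos
  have hdet := hM.det_pos
  rw [← eig1_add_eig2] at htr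
  rw [← eig1_mul_eig2 hM.1] at hdet
  nlinarith [eig2_le_eig1 M]

lemma trace_inv_fin_two (M : Matrix (Fin 2) (Fin 2) ℝ) : M⁻¹.trace = M.trace / M.det := by
  rw [inv_def, trace_smul, adjugate_fin_two, trace_fin_two, trace_fin_two]
  simp only [Ring.inverse_eq_inv', of_apply, cons_val', cons_val_zero, cons_val_fin_one,
    cons_val_one, smul_eq_mul]
  ring

lemma trace_inv_eq_inv_eig1_add_inv_eig2 (hM : M.PosDef) :
    M⁻¹.trace = (eig1 M)⁻¹ + (eig2 M)⁻¹ := by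
  have h₂ := eig2_pos hM
  have h₁ := h₂.trans_le (eig2_le_eig1 M)
  rw [trace_inv_fin_two, ← eig1_add_eig2, ← eig1_mul_eig2 hM.1]
  field_simp
  ring

theorem trace_inv_sub_trace_inv_add_le (hP : P.PosDef) (hE : E.PosSemidef) {r : ℝ} (hr : 0 < r)
    (hrQ : r ≤ eig2 (P + E)) :
    P⁻¹.trace - (P + E)⁻¹.trace ≤ E.trace / (eig2 P * r) := by
  have hQ := hP.add_posSemidef hE
  have htr : E.trace = eig1 (P + E) + eig2 (P + E) - (eig1 P + eig2 P) := by
    rw [eig1_add_eig2, eig1_add_eig2, trace_add]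
    ring
  rw [trace_inv_eq_inv_eig1_add_inv_eig2 hP, trace_inv_eq_inv_eig1_add_inv_eig2 hQ, htr]
  exact inv_add_inv_sub_inv_add_inv_le (eig2_pos hP) (eig2_le_eig1 P) (eig2_le_eig1 _)
    (eig1_le_eig1_add hP.1 hE) (eig2_le_eig2_add hP.1 hE) hr hrQ

end FinTwo

theorem fPa_union_gain_upper_bound_general
    {ι : Type*} [DecidableEq ι]
    (Fp : Matrix (Fin 2) (Fin 2) ℝ) (H : ι → Matrix (Fin 2) (Fin 2) ℝ)
    (hFp : Fp.PosDef) (hH : ∀ y, (H y).PosSemidef)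
    (Y A : Finset ι)
    (z' : ι) (hz' : z' ∈ A \ Y) :
    (Fp + ∑ w ∈ Y, H w)⁻¹.trace - (Fp + ∑ w ∈ A ∪ Y, H w)⁻¹.trace ≤
      (∑ y ∈ A \ Y, (H y).trace) /
        (eig2 (Fp + ∑ w ∈ Y, H w) * eig2 (Fp + ∑ w ∈ insert z' Y, H w)) := by
  have hH' (s : Finset ι) : (∑ w ∈ s, H w).PosSemidef := posSemidef_sum s fun y _ ↦ hH y
  have hF (s : Finset ι) : (Fp + ∑ w ∈ s, H w).PosDef := hFp.add_posSemidef (hH' s)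
  have hsplit {s t : Finset ι} (hst : s ⊆ t) :
      Fp + ∑ w ∈ t, H w = (Fp + ∑ w ∈ s, H w) + ∑ w ∈ t \ s, H w := by
    rw [add_assoc, add_comm (∑ w ∈ s, H w), Finset.sum_sdiff hst]
  have hz'AY : insert z' Y ⊆ A ∪ Y :=
    Finset.insert_subset (Finset.mem_union_left _ (Finset.mem_sdiff.mp hz').1)
      Finset.subset_union_right
  have hrQ : eig2 (Fp + ∑ w ∈ insert z' Y, H w) ≤ eig2 (Fp + ∑ w ∈ A ∪ Y, H w) := by
    rw [hsplit hz'AY]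
    exact eig2_le_eig2_add (hF _).1 (hH' _)
  rw [hsplit Finset.subset_union_right, Finset.union_sdiff_right] at hrQ ⊢
  rw [← trace_sum]
  exact trace_inv_sub_trace_inv_add_le (hF Y) (hH' _) (eig2_pos (hF _)) hrQ

/-- Eqs. (42)–(43) in the proof of Lemma 4: upper bound on
`Tr((F_p+H(Y))⁻¹) − Tr((F_p+H(A∪Y))⁻¹)`, where
`z' ∈ argmax_{y∈A\Y} λ₁(F_p + H({y}∪Y))`. -/
theorem fPa_union_gain_upper_bound
    {ι : Type*} [Fintype ι] [DecidableEq ι]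
    (Fp : Matrix (Fin 2) (Fin 2) ℝ) (H : ι → Matrix (Fin 2) (Fin 2) ℝ)
    (hFp : Fp.PosDef) (hH : ∀ y, (H y).PosSemidef)
    (Y A : Finset ι) (hAY : (A \ Y).Nonempty)
    (z' : ι) (hz' : z' ∈ A \ Y)
    (hz'max : ∀ y ∈ A \ Y,
      eig1 (Fp + ∑ w ∈ insert y Y, H w) ≤ eig1 (Fp + ∑ w ∈ insert z' Y, H w)) :
    (Fp + ∑ w ∈ Y, H w)⁻¹.trace - (Fp + ∑ w ∈ A ∪ Y, H w)⁻¹.trace ≤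
      (∑ y ∈ A \ Y, (H y).trace) /
        (eig2 (Fp + ∑ w ∈ Y, H w) * eig2 (Fp + ∑ w ∈ insert z' Y, H w)) :=
  fPa_union_gain_upper_bound_general Fp H hFp hH Y A z' hz'
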